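/- There exists a constant C > 0, independent of all parameters, such that for every r ∈ ℕ with r ≥ 1, n = 2^r, all nonnegative reals k_0,…,k_{r−1}, and every 0 ≤ j ≤ r−1, one has |W_j| · Σ_{l=0}^{r−1} μ(j,l) k_l ≤ C · (k_j + Σ_{l=0, l≠j}^{r−1} 2^{−|j−l|/2} k_l), where |W_0| = 2 and |W_j| = 2^j for j ≥ 1. -/

import Mathlib

/-- The discrete Fourier transform of `x ∈ ℂ^(2^r)`:
`Fx(ω) = n^{-1/2} ∑_{t=0}^{n-1} x(t) e^{2πiωt/n}` with `n = 2^r`. -/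
noncomputable def dft (r : ℕ) (x : Fin (2^r) → ℂ) (ω : ℤ) : ℂ :=
  (Real.sqrt (2^r) : ℂ)⁻¹ *
    ∑ t : Fin (2^r), x t * Complex.exp (2 * Real.pi * Complex.I * (ω : ℂ) * ((t : ℕ) : ℂ) / (2^r : ℂ))

/-- The Haar scaling vector `ψ(t) = 2^{-r/2}`. -/
noncomputable def haarPsi (r : ℕ) : Fin (2^r) → ℂ :=
  fun _ => (((2:ℝ) ^ (-(r:ℝ)/2) : ℝ) : ℂ)

/-- The discrete Haar wavelet at scale `j` and position `p`. -/
noncomputable def haarPhi (r j p : ℕ) : Fin (2^r) → ℂ := fun t =>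
  if p * 2^(r-j) ≤ (t:ℕ) ∧ (t:ℕ) < p * 2^(r-j) + 2^(r-j-1) then
    (((2:ℝ) ^ (((j:ℝ) - r)/2) : ℝ) : ℂ)
  else if p * 2^(r-j) + 2^(r-j-1) ≤ (t:ℕ) ∧ (t:ℕ) < (p+1) * 2^(r-j) then
    -(((2:ℝ) ^ (((j:ℝ) - r)/2) : ℝ) : ℂ)
  else 0

/-- The frequency bands: `W_0 = {0,1}` and
`W_j = {-2^j+1,…,-2^{j-1}} ∪ {2^{j-1}+1,…,2^j}` for `j ≥ 1`. -/
noncomputable def bandW (j : ℕ) : Finset ℤ :=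
  if j = 0 then {0, 1}
  else Finset.Icc (-(2:ℤ)^j + 1) (-(2:ℤ)^(j-1)) ∪ Finset.Icc ((2:ℤ)^(j-1) + 1) ((2:ℤ)^j)

theorem bandW_nonempty (j : ℕ) : (bandW j).Nonempty := by
  unfold bandW
  split
  · exact ⟨0, by simp⟩
  · refine Finset.Nonempty.mono Finset.subset_union_right ⟨(2:ℤ)^j, ?_⟩
    rw [Finset.mem_Icc]
    refine ⟨?_, le_refl _⟩
    have h1 : (1:ℤ) ≤ (2:ℤ)^(j-1) := one_le_pow₀ (by norm_num)
    have h2 : (2:ℤ)^(j-1) + (2:ℤ)^(j-1) ≤ (2:ℤ)^j := by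
      rw [← two_mul, ← pow_succ']
      exact pow_le_pow_right₀ (by norm_num) (by omega)
    omega

/-- The number of columns of the Fourier–Haar block `U_{jl}`: level `0` contributes the two
vectors `ψ, φ_{0,0}`, and level `l ≥ 1` contributes the `2^l` wavelets `φ_{l,p}`. -/
def numCols (l : ℕ) : ℕ := if l = 0 then 2 else 2^l

theorem numCols_pos (l : ℕ) : 0 < numCols l := by
  unfold numCols; split <;> positivity

/-- The entry of the Fourier–Haar block `U_{jl}` in row `ω` and column `q`. -/
noncomputable def Uentry (r l : ℕ) (ω : ℤ) (q : ℕ) : ℂ :=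
  if l = 0 then (if q = 0 then dft r (haarPsi r) ω else dft r (haarPhi r 0 0) ω)
  else dft r (haarPhi r l q) ω

/-- The coherence `μ(U_{jl}) = max_{ω,q} |(U_{jl})_{ω,q}|²` of the Fourier–Haar block. -/
noncomputable def coherence (r j l : ℕ) : ℝ :=
  ((bandW j) ×ˢ Finset.range (numCols l)).sup'
    (Finset.Nonempty.product (bandW_nonempty j)
      ⟨0, Finset.mem_range.mpr (numCols_pos l)⟩)
    (fun q => ‖Uentry r l q.1 q.2‖ ^ 2)

/-- The Fourier–Haar block `U_{jl}`, with rows indexed by `ω ∈ W_j` and columns given by the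
DFT of the level-`l` Haar vectors. -/
noncomputable def Umat (r j l : ℕ) : Matrix (bandW j) (Fin (numCols l)) ℂ :=
  fun ω q => Uentry r l (ω : ℤ) (q : ℕ)

/-- The `ℓ² → ℓ²` operator norm (largest singular value) of the Fourier–Haar block. -/
noncomputable def UopNorm (r j l : ℕ) : ℝ :=
  ‖LinearMap.toContinuousLinearMap (Matrix.toEuclideanLin (Umat r j l))‖

/-- The `(j,l)`-th local coherence `μ(j,l) = √μ(U_{jl}) · max_{l' < r} √μ(U_{jl'})`. -/
noncomputable def localCoh (r : ℕ) (hr : 1 ≤ r) (j l : ℕ) : ℝ :=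
  Real.sqrt (coherence r j l) *
    (Finset.range r).sup' ⟨0, Finset.mem_range.mpr hr⟩
      (fun l' => Real.sqrt (coherence r j l'))

/-!
Every entry of `U_{jl}` is `O(2^{-j/2} 2^{-|j-l|/2})`. Writing `ζ = e^{2πiω/2^r}` and
`m = 2^{r-l-1}`, the DFT of `φ_{l,p}` at `ω` is a unimodular phase times
`2^{(l-2r)/2} (1 - ζ^m) ∑_{s<m} ζ^s`. For `ω ∈ W_j \ {0}` we have `|ζ - 1| ≥ 4|ω|/2^r ≥ 2^{j+1-r}`,
so the geometric sum is at most `2^{r-j}`, while `|1 - ζ^m| ≤ min(2, π 2^{j-l})`: the first bound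
gives the decay for `l ≤ j`, the second for `l > j`. The DFT of `ψ` vanishes off `ω = 0`. Hence
`μ(j,l) ≤ 16 · 2^{-j} 2^{-|j-l|/2}`, and `|W_j| ≤ 2^{j+1}` yields the claim with `C = 32`.
-/

open Complex Finset
open scoped Real

lemma norm_exp_I_mul_ofReal_sub_one_le_two (x : ℝ) : ‖exp (I * x) - 1‖ ≤ 2 := by
  rw [norm_exp_I_mul_ofReal_sub_one, norm_mul, Real.norm_two, Real.norm_eq_abs]
  nlinarith [Real.abs_sin_le_one (x / 2)]

lemma mul_abs_le_norm_exp_I_mul_ofReal_sub_one {x : ℝ} (hx : |x| ≤ π) :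
    2 / π * |x| ≤ ‖exp (I * x) - 1‖ := by
  have hsin := Real.mul_abs_le_abs_sin (x := x / 2) (by rw [abs_div, abs_two]; linarith)
  rw [abs_div, abs_two] at hsin
  rw [norm_exp_I_mul_ofReal_sub_one, norm_mul, Real.norm_two, Real.norm_eq_abs]
  linarith

lemma norm_geom_sum_mul_norm_sub_one {R : Type*} [NormedDivisionRing R] (z : R) (m : ℕ) :
    ‖∑ s ∈ range m, z ^ s‖ * ‖z - 1‖ = ‖z ^ m - 1‖ := by
  rw [← norm_mul, geom_sum_mul]

lemma geom_sum_Ico_add {R : Type*} [Semiring R] (z : R) (a m : ℕ) :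
    ∑ t ∈ Ico a (a + m), z ^ t = z ^ a * ∑ s ∈ range m, z ^ s := by
  rw [sum_Ico_eq_sum_range, add_tsub_cancel_left, mul_sum]
  simp only [pow_add]

noncomputable def dftRoot (r : ℕ) (ω : ℤ) : ℂ := exp (I * ↑(2 * π * ω / 2 ^ r))

lemma dftRoot_pow (r : ℕ) (ω : ℤ) (n : ℕ) :
    dftRoot r ω ^ n = exp (I * ↑(n * (2 * π * ω / 2 ^ r))) := by
  rw [dftRoot, ← exp_nat_mul]; push_cast; ring_nf

lemma norm_dftRoot (r : ℕ) (ω : ℤ) : ‖dftRoot r ω‖ = 1 := norm_exp_I_mul_ofReal _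

lemma dft_eq_sum_pow (r : ℕ) (x : Fin (2 ^ r) → ℂ) (ω : ℤ) :
    dft r x ω = (√(2 ^ r) : ℂ)⁻¹ * ∑ t, x t * dftRoot r ω ^ (t : ℕ) := by
  simp only [dft, dftRoot_pow]
  congr 2 with t
  congr 2
  push_cast
  ring

lemma dftRoot_pow_two_pow (r : ℕ) (ω : ℤ) : dftRoot r ω ^ 2 ^ r = 1 := by
  rw [dftRoot_pow, ← exp_int_mul_two_pi_mul_I ω]
  congr 1
  push_cast
  field_simp

lemma dftRoot_pow_two_pow_sub {r l : ℕ} (hl : l < r) (ω : ℤ) :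
    dftRoot r ω ^ 2 ^ (r - l - 1) = exp (I * ↑(π * ω / 2 ^ l)) := by
  have h : (2:ℝ) ^ r = 2 ^ (r - l - 1) * 2 * 2 ^ l := by
    rw [← pow_succ, ← pow_add]; congr 1; omega
  rw [dftRoot_pow, h]
  congr 3
  push_cast
  field_simp

lemma le_norm_dftRoot_sub_one {r : ℕ} {ω : ℤ} (hω : 2 * |(ω : ℝ)| ≤ 2 ^ r) :
    4 * |(ω : ℝ)| / 2 ^ r ≤ ‖dftRoot r ω - 1‖ := by
  have h2r : (0:ℝ) < 2 ^ r := by positivity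
  have habs : |2 * π * ω / 2 ^ r| = 2 * π * |(ω : ℝ)| / 2 ^ r := by
    rw [abs_div, abs_mul, abs_of_pos (by positivity : (0:ℝ) < 2 * π), abs_of_pos h2r]
  have hle : |2 * π * ω / 2 ^ r| ≤ π := by
    rw [habs, div_le_iff₀ h2r]; nlinarith [Real.pi_pos]
  calc 4 * |(ω : ℝ)| / 2 ^ r = 2 / π * |2 * π * ω / 2 ^ r| := by
        rw [habs]; field_simp; ring
    _ ≤ _ := mul_abs_le_norm_exp_I_mul_ofReal_sub_one hle

lemma norm_dftRoot_pow_sub_one_le_two (r : ℕ) (ω : ℤ) (n : ℕ) : ‖dftRoot r ω ^ n - 1‖ ≤ 2 := by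
  rw [dftRoot_pow]; exact norm_exp_I_mul_ofReal_sub_one_le_two _

lemma succ_mul_two_pow_sub {r l : ℕ} (hl : l < r) (p : ℕ) :
    (p + 1) * 2 ^ (r - l) = p * 2 ^ (r - l) + 2 ^ (r - l - 1) + 2 ^ (r - l - 1) := by
  rw [add_mul, one_mul, add_assoc, ← two_mul, ← pow_succ']; congr 2; omega

lemma haarPhi_eq_indicator_sub {r l : ℕ} (hl : l < r) (p : ℕ) (t : Fin (2 ^ r)) :
    haarPhi r l p t =
      (if (t : ℕ) ∈ Ico (p * 2 ^ (r - l)) (p * 2 ^ (r - l) + 2 ^ (r - l - 1))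
        then (((2:ℝ) ^ (((l:ℝ) - r) / 2) : ℝ) : ℂ) else 0) -
      (if (t : ℕ) ∈ Ico (p * 2 ^ (r - l) + 2 ^ (r - l - 1))
          (p * 2 ^ (r - l) + 2 ^ (r - l - 1) + 2 ^ (r - l - 1))
        then (((2:ℝ) ^ (((l:ℝ) - r) / 2) : ℝ) : ℂ) else 0) := by
  simp only [haarPhi, mem_Ico, succ_mul_two_pow_sub hl]
  split_ifs <;> first | (exfalso; omega) | ring

lemma sum_haarPhi_mul_pow {r l p : ℕ} (hl : l < r) (hp : p < 2 ^ l) (z : ℂ) :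
    ∑ t : Fin (2 ^ r), haarPhi r l p t * z ^ (t : ℕ) =
      (((2:ℝ) ^ (((l:ℝ) - r) / 2) : ℝ) : ℂ) * z ^ (p * 2 ^ (r - l)) * (1 - z ^ 2 ^ (r - l - 1)) *
        ∑ s ∈ range (2 ^ (r - l - 1)), z ^ s := by
  set a := p * 2 ^ (r - l)
  set m := 2 ^ (r - l - 1)
  have hsub : Ico a (a + m + m) ⊆ range (2 ^ r) := by
    have : a + m + m ≤ 2 ^ r := calc
      a + m + m = (p + 1) * 2 ^ (r - l) := (succ_mul_two_pow_sub hl p).symm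
      _ ≤ 2 ^ l * 2 ^ (r - l) := Nat.mul_le_mul_right _ hp
      _ = 2 ^ r := by rw [← pow_add]; congr 1; omega
    intro t ht; simp only [mem_Ico, mem_range] at ht ⊢; omega
  simp only [haarPhi_eq_indicator_sub hl]
  rw [Fin.sum_univ_eq_sum_range (fun t => ((if t ∈ Ico a (a + m) then _ else 0) -
    (if t ∈ Ico (a + m) (a + m + m) then _ else 0)) * z ^ t)]
  simp only [sub_mul, ite_mul, zero_mul, sum_sub_distrib, sum_ite_mem]
  rw [inter_eq_right.2 ((Ico_subset_Ico_right (Nat.le_add_right _ _)).trans hsub),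
    inter_eq_right.2 ((Ico_subset_Ico_left (Nat.le_add_right _ _)).trans hsub),
    ← mul_sum, ← mul_sum, geom_sum_Ico_add, geom_sum_Ico_add, pow_add]
  ring

lemma dftRoot_zero (r : ℕ) : dftRoot r 0 = 1 := by simp [dftRoot]

lemma dftRoot_ne_one {r : ℕ} {ω : ℤ} (hω : ω ≠ 0) (h : 2 * |(ω : ℝ)| ≤ 2 ^ r) :
    dftRoot r ω ≠ 1 := by
  intro h1
  have := le_norm_dftRoot_sub_one h
  rw [h1, sub_self, norm_zero] at this
  have : (0:ℝ) < 4 * |(ω : ℝ)| / 2 ^ r := by positivity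
  linarith

lemma dft_haarPsi_zero (r : ℕ) : dft r (haarPsi r) 0 = 1 := by
  have h : (2:ℝ) ^ (-(r:ℝ) / 2) * 2 ^ r = √(2 ^ r) := by
    rw [Real.sqrt_eq_rpow, ← Real.rpow_natCast, ← Real.rpow_mul zero_le_two,
      ← Real.rpow_add zero_lt_two]
    ring_nf
  have hpos : (0:ℝ) < 2 ^ (-(r:ℝ) / 2) * 2 ^ r := by positivity
  rw [dft_eq_sum_pow, dftRoot_zero]
  simp only [haarPsi, one_pow, mul_one, sum_const, card_univ, Fintype.card_fin, nsmul_eq_mul]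
  rw [← h, inv_mul_eq_one₀ (by exact_mod_cast hpos.ne')]
  push_cast
  ring

lemma dft_haarPsi_of_ne_zero {r : ℕ} {ω : ℤ} (hω : ω ≠ 0) (h : 2 * |(ω : ℝ)| ≤ 2 ^ r) :
    dft r (haarPsi r) ω = 0 := by
  have hgeom : ∑ t ∈ range (2 ^ r), dftRoot r ω ^ t = 0 := by
    have := geom_sum_mul (dftRoot r ω) (2 ^ r)
    rw [dftRoot_pow_two_pow, sub_self] at this
    exact (mul_eq_zero.1 this).resolve_right (sub_ne_zero.2 (dftRoot_ne_one hω h))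
  rw [dft_eq_sum_pow]
  simp only [haarPsi]
  rw [← mul_sum, Fin.sum_univ_eq_sum_range (dftRoot r ω ^ ·), hgeom]
  simp

lemma dft_haarPhi_zero {r l p : ℕ} (hl : l < r) (hp : p < 2 ^ l) : dft r (haarPhi r l p) 0 = 0 := by
  rw [dft_eq_sum_pow, dftRoot_zero, sum_haarPhi_mul_pow hl hp]
  simp

lemma norm_dft_haarPhi_le {r l p j : ℕ} (hl : l < r) (hp : p < 2 ^ l) {ω : ℤ}
    (hlo : (2:ℝ) ^ j ≤ 2 * |(ω : ℝ)|) (hhi : 2 * |(ω : ℝ)| ≤ 2 ^ r) :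
    ‖dft r (haarPhi r l p) ω‖ ≤ 2 ^ ((l:ℝ) / 2 - j) * ‖dftRoot r ω ^ 2 ^ (r - l - 1) - 1‖ := by
  set ζ := dftRoot r ω
  set m := 2 ^ (r - l - 1)
  have hζ : 2 * 2 ^ j / 2 ^ r ≤ ‖ζ - 1‖ :=
    le_trans (div_le_div_of_nonneg_right (by linarith) (by positivity)) (le_norm_dftRoot_sub_one hhi)
  have hgeom : ‖∑ s ∈ range m, ζ ^ s‖ ≤ 2 ^ r / 2 ^ j := by
    have hpos : 0 < ‖ζ - 1‖ := lt_of_lt_of_le (by positivity) hζ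
    calc ‖∑ s ∈ range m, ζ ^ s‖ = ‖ζ ^ m - 1‖ / ‖ζ - 1‖ := by
          rw [← norm_geom_sum_mul_norm_sub_one, mul_div_cancel_right₀ _ hpos.ne']
      _ ≤ 2 / (2 * 2 ^ j / 2 ^ r) := by
          gcongr; exact norm_dftRoot_pow_sub_one_le_two r ω m
      _ = 2 ^ r / 2 ^ j := by field_simp
  have hscale : (√(2 ^ r))⁻¹ * 2 ^ (((l:ℝ) - r) / 2) * (2 ^ r / 2 ^ j) = (2:ℝ) ^ ((l:ℝ) / 2 - j) := by
    rw [Real.sqrt_eq_rpow, ← Real.rpow_natCast, ← Real.rpow_natCast, ← Real.rpow_mul zero_le_two,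
      ← Real.rpow_neg zero_le_two, ← Real.rpow_add zero_lt_two, ← Real.rpow_sub zero_lt_two,
      ← Real.rpow_add zero_lt_two]
    ring_nf
  rw [dft_eq_sum_pow, sum_haarPhi_mul_pow hl hp, norm_mul, norm_mul, norm_mul, norm_mul,
    norm_pow, norm_dftRoot, one_pow, mul_one, norm_inv, Complex.norm_real, Complex.norm_real,
    Real.norm_of_nonneg (Real.sqrt_nonneg _), Real.norm_of_nonneg (by positivity), ← hscale,
    norm_sub_rev 1]
  calc _ = (√(2 ^ r))⁻¹ * 2 ^ (((l:ℝ) - r) / 2) * ‖ζ ^ m - 1‖ * ‖∑ s ∈ range m, ζ ^ s‖ := by ring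
    _ ≤ (√(2 ^ r))⁻¹ * 2 ^ (((l:ℝ) - r) / 2) * ‖ζ ^ m - 1‖ * (2 ^ r / 2 ^ j) := by gcongr
    _ = _ := by ring

lemma norm_dftRoot_pow_sub_one_le {r l j : ℕ} (hl : l < r) {ω : ℤ} (hω : |(ω : ℝ)| ≤ 2 ^ j) :
    ‖dftRoot r ω ^ 2 ^ (r - l - 1) - 1‖ ≤ π * 2 ^ ((j:ℝ) - l) := by
  rw [dftRoot_pow_two_pow_sub hl]
  refine Real.norm_exp_I_mul_ofReal_sub_one_le.trans ?_
  rw [Real.norm_eq_abs, abs_div, abs_mul, abs_of_pos Real.pi_pos, abs_of_pos (by positivity : (0:ℝ) < 2 ^ l),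
    Real.rpow_sub two_pos, Real.rpow_natCast, Real.rpow_natCast, mul_div_assoc]
  gcongr

lemma two_rpow_mul_le_of_le_min (j l : ℕ) {M : ℝ} (h2 : M ≤ 2) (hπ : M ≤ π * 2 ^ ((j:ℝ) - l)) :
    2 ^ ((l:ℝ) / 2 - j) * M ≤ 4 * 2 ^ (-(j:ℝ) / 2) * 2 ^ (-|(j:ℝ) - l| / 2) := by
  have hpos : (0:ℝ) < 2 ^ ((l:ℝ) / 2 - j) := by positivity
  rw [mul_assoc, ← Real.rpow_add two_pos]
  rcases le_total l j with h | h
  · rw [abs_of_nonneg (sub_nonneg.2 (Nat.cast_le.2 h)),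
      show -(j:ℝ) / 2 + -((j:ℝ) - l) / 2 = (l:ℝ) / 2 - j by ring]
    nlinarith
  · rw [abs_of_nonpos (sub_nonpos.2 (Nat.cast_le.2 h)),
      show -(j:ℝ) / 2 + -(-((j:ℝ) - l)) / 2 = ((l:ℝ) / 2 - j) + (j - l) by ring,
      Real.rpow_add two_pos]
    calc 2 ^ ((l:ℝ) / 2 - j) * M ≤ 2 ^ ((l:ℝ) / 2 - j) * (π * 2 ^ ((j:ℝ) - l)) := by gcongr
      _ = π * (2 ^ ((l:ℝ) / 2 - j) * 2 ^ ((j:ℝ) - l)) := by ring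
      _ ≤ 4 * (2 ^ ((l:ℝ) / 2 - j) * 2 ^ ((j:ℝ) - l)) := by gcongr; exact Real.pi_le_four

lemma bandW_cases {j : ℕ} {ω : ℤ} (hω : ω ∈ bandW j) :
    (j = 0 ∧ ω = 0) ∨ ((2:ℝ) ^ j ≤ 2 * |(ω : ℝ)| ∧ |(ω : ℝ)| ≤ 2 ^ j) := by
  unfold bandW at hω
  split_ifs at hω with hj
  · subst hj
    rcases mem_insert.1 hω with rfl | hω
    · exact Or.inl ⟨rfl, rfl⟩
    · rw [mem_singleton.1 hω]; norm_num
  · right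
    have h2 : (2:ℤ) ^ j = 2 * 2 ^ (j - 1) := by rw [← pow_succ']; congr 1; omega
    have : (2:ℤ) ^ j ≤ 2 * |ω| ∧ |ω| ≤ 2 ^ j := by
      simp only [mem_union, mem_Icc] at hω
      rcases abs_cases ω with ⟨h, _⟩ | ⟨h, _⟩ <;> rw [h] <;> omega
    exact_mod_cast this

lemma card_bandW_le (j : ℕ) : (bandW j).card ≤ 2 * 2 ^ j := by
  unfold bandW
  split_ifs with hj
  · subst hj; simp
  · refine (card_union_le _ _).trans ?_
    rw [Int.card_Icc, Int.card_Icc]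
    have h2 : (2:ℤ) ^ j = 2 * 2 ^ (j - 1) := by rw [← pow_succ']; congr 1; omega
    have : (1:ℤ) ≤ 2 ^ (j - 1) := one_le_pow₀ (by norm_num)
    have : ((2 ^ j : ℕ) : ℤ) = 2 ^ j := by norm_num
    omega

lemma norm_Uentry_le {r j l : ℕ} (hj : j < r) (hl : l < r) {ω : ℤ} (hω : ω ∈ bandW j)
    {q : ℕ} (hq : q < numCols l) :
    ‖Uentry r l ω q‖ ≤ 4 * 2 ^ (-(j:ℝ) / 2) * 2 ^ (-|(j:ℝ) - l| / 2) := by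
  have hbound : (0:ℝ) ≤ 4 * 2 ^ (-(j:ℝ) / 2) * 2 ^ (-|(j:ℝ) - l| / 2) := by positivity
  have hq' : l ≠ 0 → q < 2 ^ l := fun h => by simpa [numCols, h] using hq
  rcases bandW_cases hω with ⟨rfl, rfl⟩ | ⟨hlo, hhi⟩
  · unfold Uentry
    split_ifs with hl0 hq0
    · subst hl0; rw [dft_haarPsi_zero]; norm_num
    · rw [dft_haarPhi_zero (hl0 ▸ hl) (by norm_num), norm_zero]; exact hbound
    · rw [dft_haarPhi_zero hl (hq' hl0), norm_zero]; exact hbound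
  · have hω : 2 * |(ω : ℝ)| ≤ 2 ^ r := calc
      2 * |(ω : ℝ)| ≤ 2 ^ (j + 1) := by rw [pow_succ']; linarith
      _ ≤ 2 ^ r := pow_le_pow_right₀ one_le_two hj
    have hω0 : ω ≠ 0 := by rintro rfl; norm_num at hlo; linarith [pow_pos (two_pos (α := ℝ)) j]
    have hwave : ∀ {p : ℕ}, p < 2 ^ l → ‖dft r (haarPhi r l p) ω‖ ≤
        4 * 2 ^ (-(j:ℝ) / 2) * 2 ^ (-|(j:ℝ) - l| / 2) := fun hp =>
      (norm_dft_haarPhi_le hl hp hlo hω).trans (two_rpow_mul_le_of_le_min j l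
        (norm_dftRoot_pow_sub_one_le_two r ω _) (norm_dftRoot_pow_sub_one_le hl hhi))
    unfold Uentry
    split_ifs with hl0 hq0
    · rw [dft_haarPsi_of_ne_zero hω0 hω, norm_zero]; exact hbound
    · subst hl0; exact hwave (by norm_num)
    · exact hwave (hq' hl0)

lemma sqrt_coherence_le {r j l : ℕ} (hj : j < r) (hl : l < r) :
    √(coherence r j l) ≤ 4 * 2 ^ (-(j:ℝ) / 2) * 2 ^ (-|(j:ℝ) - l| / 2) := by
  refine Real.sqrt_le_iff.2 ⟨by positivity, sup'_le _ _ ?_⟩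
  rintro ⟨ω, q⟩ h
  rw [mem_product, mem_range] at h
  exact pow_le_pow_left₀ (norm_nonneg _) (norm_Uentry_le hj hl h.1 h.2) 2

lemma localCoh_le {r : ℕ} (hr : 1 ≤ r) {j l : ℕ} (hj : j < r) (hl : l < r) :
    localCoh r hr j l ≤ 16 * 2 ^ (-(j:ℝ)) * 2 ^ (-|(j:ℝ) - l| / 2) := by
  have hmax : (range r).sup' ⟨0, mem_range.2 hr⟩ (fun l' => √(coherence r j l')) ≤
      4 * 2 ^ (-(j:ℝ) / 2) := by
    refine sup'_le _ _ fun l' hl' => (sqrt_coherence_le hj (mem_range.1 hl')).trans ?_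
    have : (2:ℝ) ^ (-|(j:ℝ) - l'| / 2) ≤ 1 :=
      Real.rpow_le_one_of_one_le_of_nonpos one_le_two (by linarith [abs_nonneg ((j:ℝ) - l')])
    have : (0:ℝ) < 4 * 2 ^ (-(j:ℝ) / 2) := by positivity
    nlinarith
  have hmax0 : 0 ≤ (range r).sup' ⟨0, mem_range.2 hr⟩ (fun l' => √(coherence r j l')) :=
    (Real.sqrt_nonneg _).trans (le_sup' (fun l' => √(coherence r j l')) (mem_range.2 hj))
  calc localCoh r hr j l
      ≤ 4 * 2 ^ (-(j:ℝ) / 2) * 2 ^ (-|(j:ℝ) - l| / 2) * (4 * 2 ^ (-(j:ℝ) / 2)) :=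
        mul_le_mul (sqrt_coherence_le hj hl) hmax hmax0 (by positivity)
    _ = 16 * (2 ^ (-(j:ℝ) / 2) * 2 ^ (-(j:ℝ) / 2)) * 2 ^ (-|(j:ℝ) - l| / 2) := by ring
    _ = 16 * 2 ^ (-(j:ℝ)) * 2 ^ (-|(j:ℝ) - l| / 2) := by rw [← Real.rpow_add two_pos, add_halves]

lemma card_bandW_mul_localCoh_le {r : ℕ} (hr : 1 ≤ r) {j l : ℕ} (hj : j < r) (hl : l < r) :
    (bandW j).card * localCoh r hr j l ≤ 32 * 2 ^ (-|(j:ℝ) - l| / 2) := by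
  have hcard : ((bandW j).card : ℝ) ≤ 2 * 2 ^ j := by exact_mod_cast card_bandW_le j
  calc (bandW j).card * localCoh r hr j l
      ≤ (bandW j).card * (16 * 2 ^ (-(j:ℝ)) * 2 ^ (-|(j:ℝ) - l| / 2)) := by
        gcongr; exact localCoh_le hr hj hl
    _ ≤ 2 * 2 ^ j * (16 * 2 ^ (-(j:ℝ)) * 2 ^ (-|(j:ℝ) - l| / 2)) := by gcongr
    _ = 32 * 2 ^ (-|(j:ℝ) - l| / 2) := by
        rw [Real.rpow_neg zero_le_two, Real.rpow_natCast]; field_simp; ring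

/-- There is a universal constant `C > 0` such that for every `r ≥ 1`, all nonnegative reals
`k_0,…,k_{r-1}` and every `0 ≤ j ≤ r-1`:
`|W_j| ∑_{l<r} μ(j,l) k_l ≤ C (k_j + ∑_{l<r, l≠j} 2^{-|j-l|/2} k_l)`. -/
theorem card_mul_localCoh_sum_le : ∃ C : ℝ, 0 < C ∧ ∀ r : ℕ, ∀ hr : 1 ≤ r,
    ∀ k : ℕ → ℝ, (∀ l, 0 ≤ k l) → ∀ j : ℕ, j ≤ r - 1 →
    ((bandW j).card : ℝ) * ∑ l ∈ Finset.range r, localCoh r hr j l * k l ≤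
      C * (k j + ∑ l ∈ (Finset.range r).erase j, (2:ℝ)^(-|(j:ℝ) - (l:ℝ)|/2) * k l) := by
  refine ⟨32, by norm_num, fun r hr k hk j hj => ?_⟩
  have hjr : j < r := by omega
  calc ((bandW j).card : ℝ) * ∑ l ∈ range r, localCoh r hr j l * k l
      = ∑ l ∈ range r, (bandW j).card * localCoh r hr j l * k l := by
        rw [mul_sum]; simp only [mul_assoc]
    _ ≤ ∑ l ∈ range r, 32 * 2 ^ (-|(j:ℝ) - l| / 2) * k l :=
        sum_le_sum fun l hl => mul_le_mul_of_nonneg_right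
          (card_bandW_mul_localCoh_le hr hjr (mem_range.1 hl)) (hk l)
    _ = 32 * (k j + ∑ l ∈ (range r).erase j, (2:ℝ) ^ (-|(j:ℝ) - l| / 2) * k l) := by
        rw [← add_sum_erase _ _ (mem_range.2 hjr), mul_add, mul_sum]
        simp [mul_assoc]
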